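/- Let Γ be a connected weighted graph of genus g, μ the canonical polarization of degree g-1, D a μ-semistable divisor on Γ, and φ an acyclic flow on Γ with 2D + Div(φ) = K_Γ. Then |φ(e)| ≤ 1 for every oriented edge e of Γ. -/

import Mathlib

/-! A common framework for weighted multigraphs, divisors, flows,
subdivisions, pseudo-divisors and specializations, following
"The moduli space of quasistable spin curves". -/

noncomputable section

/-- A finite weighted multigraph (with a reference orientation of each edge). -/
structure WGraph where
  V : Type
  E : Type
  [fintV : Fintype V]
  [decV : DecidableEq V]
  [fintE : Fintype E]
  [decE : DecidableEq E]
  src : E → V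
  tgt : E → V
  w : V → ℕ

namespace WGraph

attribute [instance] WGraph.fintV WGraph.decV WGraph.fintE WGraph.decE

attribute [local instance] Classical.propDecidable

variable (G : WGraph)

/-- Degree of a vertex (loops count twice). -/
def deg (v : G.V) : ℕ :=
  (Finset.univ.filter (fun e => G.src e = v)).card +
    (Finset.univ.filter (fun e => G.tgt e = v)).card

/-- Degree of a vertex in the edge set `A` (loops count twice). -/
def degIn (A : Finset G.E) (v : G.V) : ℕ :=
  (A.filter (fun e => G.src e = v)).card + (A.filter (fun e => G.tgt e = v)).card

/-- Canonical divisor: `K(v) = 2 w(v) - 2 + deg(v)`. -/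
def K (v : G.V) : ℤ := 2 * (G.w v : ℤ) - 2 + (G.deg v : ℤ)

/-- Canonical polarization of degree `g - 1`. -/
def canPol (v : G.V) : ℚ := (G.K v : ℚ) / 2

/-- Oriented edges: `(e, true)` is `src → tgt`, `(e, false)` is the reverse. -/
abbrev OEdge := G.E × Bool

def osrc (oe : G.OEdge) : G.V := if oe.2 then G.src oe.1 else G.tgt oe.1

def otgt (oe : G.OEdge) : G.V := if oe.2 then G.tgt oe.1 else G.src oe.1

/-- A flow is recorded by its values along the reference orientation;
`flowVal` gives its value on an oriented edge. -/
def flowVal (φ : G.E → ℤ) (oe : G.OEdge) : ℤ := if oe.2 then φ oe.1 else -φ oe.1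

/-- The divisor of a flow: `Div(φ)(v) = ∑_{t(e) = v} φ(e)` over oriented edges. -/
def divOf (φ : G.E → ℤ) (v : G.V) : ℤ :=
  (∑ e : G.E, if G.tgt e = v then φ e else 0) -
    ∑ e : G.E, if G.src e = v then φ e else 0

/-- `e` has exactly one endpoint in `W`. -/
def crossing (W : Finset G.V) (e : G.E) : Prop := (G.src e ∈ W) ≠ (G.tgt e ∈ W)

/-- Number of edges between `W` and its complement. -/
def delta (W : Finset G.V) : ℕ := (Finset.univ.filter (fun e => G.crossing W e)).card

/-- `β_D(W) = deg(D|_W) - μ(W) + δ_W / 2`. -/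
def beta (μ : G.V → ℚ) (D : G.V → ℤ) (W : Finset G.V) : ℚ :=
  (∑ v ∈ W, (D v : ℚ)) - (∑ v ∈ W, μ v) + (G.delta W : ℚ) / 2

def Semistable (μ : G.V → ℚ) (D : G.V → ℤ) : Prop :=
  ∀ W : Finset G.V, W ≠ Finset.univ → 0 ≤ G.beta μ D W

def Stable (μ : G.V → ℚ) (D : G.V → ℤ) : Prop :=
  ∀ W : Finset G.V, W ≠ Finset.univ → W.Nonempty → 0 < G.beta μ D W

def Quasistable (μ : G.V → ℚ) (v₀ : G.V) (D : G.V → ℤ) : Prop :=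
  ∀ W : Finset G.V, W ≠ Finset.univ →
    (0 ≤ G.beta μ D W ∧ (v₀ ∈ W → 0 < G.beta μ D W))

/-- An oriented cycle: a nonempty cyclically closed chain of oriented edges,
with pairwise distinct underlying edges and pairwise distinct vertices. -/
def IsOrientedCycle (c : List G.OEdge) : Prop :=
  c ≠ [] ∧ (c.map Prod.fst).Nodup ∧ (c.map G.osrc).Nodup ∧
    ∀ i : Fin c.length,
      G.otgt (c.get i) = G.osrc (c.get ⟨((i : ℕ) + 1) % c.length, Nat.mod_lt _ i.pos⟩)

/-- A flow is acyclic if there is no oriented cycle on which it is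
nonnegative and somewhere positive. -/
def Acyclic (φ : G.E → ℤ) : Prop :=
  ¬∃ c : List G.OEdge, G.IsOrientedCycle c ∧ (∀ oe ∈ c, 0 ≤ G.flowVal φ oe) ∧
      ∃ oe ∈ c, 0 < G.flowVal φ oe

/-- Adjacency through an edge of `A`. -/
def adjVia (A : Finset G.E) (a b : G.V) : Prop :=
  ∃ e ∈ A, (G.src e = a ∧ G.tgt e = b) ∨ (G.src e = b ∧ G.tgt e = a)

/-- Reachability using only edges of `A`. -/
def ReachVia (A : Finset G.E) : G.V → G.V → Prop := Relation.ReflTransGen (G.adjVia A)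

def Connected : Prop := Nonempty G.V ∧ ∀ u v : G.V, G.ReachVia Finset.univ u v

/-- A cyclic subgraph: a set of edges in which every vertex has even degree. -/
def IsCyclicSubgraph (P : Finset G.E) : Prop := ∀ v : G.V, Even (G.degIn P v)

/-- The characteristic flow of a vertex. -/
def charFlow (v₀ : G.V) (e : G.E) : ℤ :=
  if G.src e = v₀ ∧ G.tgt e ≠ v₀ then 1
  else if G.tgt e = v₀ ∧ G.src e ≠ v₀ then -1 else 0

/-- `Div(v₀)`, the principal divisor attached to a vertex. -/
def DivV (v₀ : G.V) : G.V → ℤ := G.divOf (G.charFlow v₀)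

/-- Principal divisors are integer combinations of the `Div(v)`. -/
def Principal (D : G.V → ℤ) : Prop :=
  ∃ a : G.V → ℤ, ∀ v, D v = ∑ u : G.V, a u * G.DivV u v

/-- Number of connected components of the subgraph with all vertices and
edge set `A`. -/
def numComponents (A : Finset G.E) : ℕ :=
  (Finset.univ.image (fun v => Finset.univ.filter (fun u => G.ReachVia A v u))).card

/-- The subdivision `Γ^S`: one exceptional vertex inserted in each edge of `S`. -/
def subdiv (S : Finset G.E) : WGraph where
  V := G.V ⊕ {e // e ∈ S}
  E := {e // e ∉ S} ⊕ {e // e ∈ S} × Bool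
  src := fun x =>
    match x with
    | .inl e => .inl (G.src e.1)
    | .inr (e, b) => if b then .inr e else .inl (G.src e.1)
  tgt := fun x =>
    match x with
    | .inl e => .inl (G.tgt e.1)
    | .inr (e, b) => if b then .inl (G.tgt e.1) else .inr e
  w := fun v =>
    match v with
    | .inl v => G.w v
    | .inr _ => 0

/-- A pseudo-divisor: value `-1` on every exceptional vertex. -/
def IsPseudoDivisor (S : Finset G.E) (D : (G.subdiv S).V → ℤ) : Prop :=
  ∀ x : {e // e ∈ S}, D (Sum.inr x) = -1

/-- A pseudo-root: `2 D + Div(φ) = K_{Γ^S}` for some acyclic flow `φ` on `Γ^S`. -/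
def IsPseudoRoot (S : Finset G.E) (D : (G.subdiv S).V → ℤ) : Prop :=
  G.IsPseudoDivisor S D ∧
    ∃ φ : (G.subdiv S).E → ℤ, (G.subdiv S).Acyclic φ ∧
      ∀ v, 2 * D v + (G.subdiv S).divOf φ v = (G.subdiv S).K v

/-- Semistability of a pseudo-divisor: semistability on the subdivision with
respect to the (extended) canonical polarization. -/
def IsSemistablePR (S : Finset G.E) (D : (G.subdiv S).V → ℤ) : Prop :=
  (G.subdiv S).Semistable (G.subdiv S).canPol D

/-- `β_{E,D}` for pseudo-divisors, on subsets of the original vertices. -/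
def betaPoly (S : Finset G.E) (D : (G.subdiv S).V → ℤ) (W : Finset G.V) : ℚ :=
  (∑ v ∈ W, (D (Sum.inl v) : ℚ)) -
    (∑ v ∈ W, (G.canPol v + (G.degIn S v : ℚ) / 2)) +
    ((Finset.univ.filter (fun e => e ∉ S ∧ G.crossing W e)).card : ℚ) / 2

/-- Polystability of a pseudo-divisor. -/
def IsPolystable (S : Finset G.E) (D : (G.subdiv S).V → ℤ) : Prop :=
  ∀ W : Finset G.V,
    0 ≤ G.betaPoly S D W ∧ ((∃ e, e ∉ S ∧ G.crossing W e) → 0 < G.betaPoly S D W)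

/-- The divisor `D_P` attached to a cyclic subgraph `P`, on `Γ^{E_P}` with
`E_P = Pᶜ`. -/
def DP (P : Finset G.E) : (G.subdiv Pᶜ).V → ℤ := fun x =>
  match x with
  | .inl v => (G.deg v : ℤ) - (G.degIn P v : ℤ) / 2 - 1 + (G.w v : ℤ)
  | .inr _ => -1

/-- The data of a semistable root-graph together with its acyclic flow. -/
def IsSemistableRootTriple (S : Finset G.E) (D : (G.subdiv S).V → ℤ)
    (φ : (G.subdiv S).E → ℤ) : Prop :=
  G.IsPseudoDivisor S D ∧ G.IsSemistablePR S D ∧ (G.subdiv S).Acyclic φ ∧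
    ∀ v, 2 * D v + (G.subdiv S).divOf φ v = (G.subdiv S).K v

/-- The induced subgraph on a vertex set `W`. -/
def induce (W : Finset G.V) : WGraph where
  V := {v // v ∈ W}
  E := {e // G.src e ∈ W ∧ G.tgt e ∈ W}
  src := fun e => ⟨G.src e.1, e.2.1⟩
  tgt := fun e => ⟨G.tgt e.1, e.2.2⟩
  w := fun v => G.w v.1

/-- Number of edges between `W` and `Wᶜ` incident to `v`. -/
def degCross (W : Finset G.V) (v : G.V) : ℕ :=
  (Finset.univ.filter (fun e => G.src e = v ∧ G.crossing W e)).card +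
    (Finset.univ.filter (fun e => G.tgt e = v ∧ G.crossing W e)).card

/-- A specialization (iterated edge contraction) of weighted graphs. -/
structure Spec (G G' : WGraph) where
  vmap : G.V → G'.V
  emap : G'.E → G.E
  emap_inj : Function.Injective emap
  vmap_surj : Function.Surjective vmap
  src_comm : ∀ e', vmap (G.src (emap e')) = G'.src e'
  tgt_comm : ∀ e', vmap (G.tgt (emap e')) = G'.tgt e'
  contract_eq : ∀ e : G.E, e ∉ Finset.univ.image emap → vmap (G.src e) = vmap (G.tgt e)
  fiber_conn : ∀ u v : G.V, vmap u = vmap v →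
    Relation.ReflTransGen
      (fun a b => ∃ e, e ∉ Finset.univ.image emap ∧
        ((G.src e = a ∧ G.tgt e = b) ∨ (G.src e = b ∧ G.tgt e = a))) u v
  weight_eq : ∀ v' : G'.V,
    (G'.w v' : ℤ) =
      (∑ v ∈ Finset.univ.filter (fun v => vmap v = v'), (G.w v : ℤ)) +
        ((Finset.univ.filter (fun e : G.E =>
            e ∉ Finset.univ.image emap ∧ vmap (G.src e) = v')).card : ℤ) -
        ((Finset.univ.filter (fun v : G.V => vmap v = v')).card : ℤ) + 1

/-- Pushforward of a divisor along a specialization. -/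
def Spec.pushDiv {G G' : WGraph} (σ : Spec G G') (D : G.V → ℤ) : G'.V → ℤ :=
  fun v' => ∑ v ∈ Finset.univ.filter (fun v => σ.vmap v = v'), D v

/-- Pushforward of a polarization along a specialization. -/
def Spec.pushPol {G G' : WGraph} (σ : Spec G G') (μ : G.V → ℚ) : G'.V → ℚ :=
  fun v' => ∑ v ∈ Finset.univ.filter (fun v => σ.vmap v = v'), μ v

/-- The induced map on vertices of subdivisions. -/
def Spec.subdivVmap {G G' : WGraph} (σ : Spec G G') (S : Finset G.E)
    (S' : Finset G'.E) : (G.subdiv S).V → (G'.subdiv S').V := fun x =>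
  match x with
  | .inl v => .inl (σ.vmap v)
  | .inr e =>
    if h : ∃ e' : {e' // e' ∈ S'}, σ.emap e'.1 = e.1 then .inr h.choose
    else .inl (σ.vmap (G.src e.1))

/-- Pushforward of a pseudo-divisor (its divisor part) along a specialization. -/
def Spec.pushSubdivDiv {G G' : WGraph} (σ : Spec G G') (S : Finset G.E)
    (S' : Finset G'.E) (D : (G.subdiv S).V → ℤ) : (G'.subdiv S').V → ℤ := fun y =>
  ∑ x ∈ Finset.univ.filter (fun x => σ.subdivVmap S S' x = y), D x

/-- Extension by zero along the edge injection of a specialization. -/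
def Spec.extendBy {G G' : WGraph} (σ : Spec G G') (x : G'.E → ℝ) : G.E → ℝ :=
  fun e => if h : ∃ e', σ.emap e' = e then x h.choose else 0

/-- Same-graph contraction of subdivisions (for `S ⊆ S'`): the vertex map.
`σb e` selects the endpoint to which the exceptional vertex of a contracted
edge `e ∈ S' \ S` is merged (`true` = target, `false` = source). -/
def contrVmap (S S' : Finset G.E) (σb : G.E → Bool) :
    (G.subdiv S').V → (G.subdiv S).V := fun x =>
  match x with
  | .inl v => .inl v
  | .inr e =>
    if h : e.1 ∈ S then .inr ⟨e.1, h⟩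
    else .inl (if σb e.1 then G.tgt e.1 else G.src e.1)

/-- Same-graph contraction of subdivisions: the edge injection. -/
def contrEmap (S S' : Finset G.E) (hSS : S ⊆ S') (σb : G.E → Bool) :
    (G.subdiv S).E → (G.subdiv S').E := fun x =>
  match x with
  | .inl e =>
    if h : e.1 ∈ S' then .inr (⟨e.1, h⟩, !σb e.1) else .inl ⟨e.1, h⟩
  | .inr eb => .inr (⟨eb.1.1, hSS eb.1.2⟩, eb.2)

/-- Specialization of pseudo-divisors over a fixed graph. -/
def PDSpec (S' : Finset G.E) (D' : (G.subdiv S').V → ℤ) (S : Finset G.E)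
    (D : (G.subdiv S).V → ℤ) : Prop :=
  S ⊆ S' ∧ ∃ σb : G.E → Bool,
    ∀ v, D v = ∑ x ∈ Finset.univ.filter (fun x => G.contrVmap S S' σb x = v), D' x

/-- Specialization of semistable root-graphs over a fixed graph: a
specialization of pseudo-divisors pushing the acyclic flow forward. -/
def RootSpec (S' : Finset G.E) (D' : (G.subdiv S').V → ℤ) (S : Finset G.E)
    (D : (G.subdiv S).V → ℤ) : Prop :=
  ∃ hSS : S ⊆ S', ∃ σb : G.E → Bool,
    (∀ v, D v = ∑ x ∈ Finset.univ.filter (fun x => G.contrVmap S S' σb x = v), D' x) ∧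
    ∀ φ' φ : _, (G.subdiv S').Acyclic φ' →
      (∀ v, 2 * D' v + (G.subdiv S').divOf φ' v = (G.subdiv S').K v) →
      (G.subdiv S).Acyclic φ →
      (∀ v, 2 * D v + (G.subdiv S).divOf φ v = (G.subdiv S).K v) →
      ∀ x, φ x = φ' (G.contrEmap S S' hSS σb x)

/-- Underlying edge of `Γ` of an edge of `Γ^S`. -/
def underE (S : Finset G.E) : (G.subdiv S).E → G.E := fun x =>
  match x with
  | .inl e => e.1
  | .inr eb => eb.1.1

/-- A specialization of triples `(Γ, E, D) ≥ (Γ', E', D')`. -/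
structure TripleSpec (G : WGraph) (S : Finset G.E) (D : (G.subdiv S).V → ℤ)
    (G' : WGraph) (S' : Finset G'.E) (D' : (G'.subdiv S').V → ℤ) where
  base : Spec G G'
  sub : Spec (G.subdiv S) (G'.subdiv S')
  vcomm : ∀ v : G.V, sub.vmap (Sum.inl v) = Sum.inl (base.vmap v)
  ecomm : ∀ x : (G'.subdiv S').E, G.underE S (sub.emap x) = base.emap (G'.underE S' x)
  edges_sub : ∀ e' ∈ S', base.emap e' ∈ S
  push_eq : ∀ y, D' y = ∑ x ∈ Finset.univ.filter (fun x => sub.vmap x = y), D x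

/-- A triple specialization is a specialization of root-graphs when it pushes
the (unique) acyclic flows forward. -/
def TripleSpec.IsRootSpec {G : WGraph} {S : Finset G.E} {D : (G.subdiv S).V → ℤ}
    {G' : WGraph} {S' : Finset G'.E} {D' : (G'.subdiv S').V → ℤ}
    (T : TripleSpec G S D G' S' D') : Prop :=
  ∀ φ φ', (G.subdiv S).Acyclic φ →
    (∀ v, 2 * D v + (G.subdiv S).divOf φ v = (G.subdiv S).K v) →
    (G'.subdiv S').Acyclic φ' →
    (∀ v, 2 * D' v + (G'.subdiv S').divOf φ' v = (G'.subdiv S').K v) →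
    ∀ x, φ' x = φ (T.sub.emap x)

/-- The cone `λ` attached to a flow: nonnegative orthant cut by the cycle
equations. -/
def lambdaSet (φ : G.E → ℤ) : Set (G.E → ℝ) :=
  {x | (∀ e, 0 ≤ x e) ∧ ∀ c : List G.OEdge, G.IsOrientedCycle c →
      ((c.map (fun oe => (G.flowVal φ oe : ℝ) * x oe.1)).sum) = 0}

/-- Its relative interior (intersection with the positive orthant). -/
def lambdaInt (φ : G.E → ℤ) : Set (G.E → ℝ) :=
  {x | (∀ e, 0 < x e) ∧ ∀ c : List G.OEdge, G.IsOrientedCycle c →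
      ((c.map (fun oe => (G.flowVal φ oe : ℝ) * x oe.1)).sum) = 0}

/-- Faces of a cone (supporting-hyperplane definition). -/
def IsFaceOf (F C : Set (G.E → ℝ)) : Prop :=
  F = C ∨ ∃ l : (G.E → ℝ) →ₗ[ℝ] ℝ, (∀ x ∈ C, 0 ≤ l x) ∧ F = C ∩ {x | l x = 0}

/-- Facets: faces of codimension one. -/
def IsFacetOf (F C : Set (G.E → ℝ)) : Prop :=
  G.IsFaceOf F C ∧
    Module.finrank ℝ (Submodule.span ℝ F) + 1 = Module.finrank ℝ (Submodule.span ℝ C)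

/-- The vector `u_V` spanning the subspace `L_E`. -/
def uVec (S : Finset G.E) (W : Finset G.V) : (G.subdiv S).E → ℝ := fun x =>
  match x with
  | .inl _ => 0
  | .inr eb =>
    if G.crossing W eb.1.1 then
      (if (if eb.2 then G.tgt eb.1.1 else G.src eb.1.1) ∈ W then 1 else -1)
    else 0

/-- The subspace `L_E ⊆ ℝ^{E(Γ^S)}`. -/
def LSub (S : Finset G.E) : Submodule ℝ ((G.subdiv S).E → ℝ) :=
  Submodule.span ℝ {u | ∃ W : Finset G.V, (∀ e, G.crossing W e → e ∈ S) ∧ u = G.uVec S W}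

/-- The diagonal map `δ_E : ℝ^{E(Γ)} → ℝ^{E(Γ^S)}`. -/
def deltaMap (S : Finset G.E) (x : G.E → ℝ) : (G.subdiv S).E → ℝ := fun e' =>
  match e' with
  | .inl e => x e.1
  | .inr eb => x eb.1.1

/-- One step of a `φ`-path avoiding the edges of `A`. -/
def phiStep (φ : G.E → ℤ) (A : Finset G.E) (a b : G.V) : Prop :=
  ∃ oe : G.OEdge, oe.1 ∉ A ∧ 0 ≤ G.flowVal φ oe ∧ G.osrc oe = a ∧ G.otgt oe = b

/-- Reachability by `φ`-paths avoiding the edges of `A`. -/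
def PhiReach (φ : G.E → ℤ) (A : Finset G.E) : G.V → G.V → Prop :=
  Relation.ReflTransGen (G.phiStep φ A)

/-- The refinement of `Γ` inserting `m e` vertices in the interior of each
edge `e`. -/
def refine (m : G.E → ℕ) : WGraph where
  V := G.V ⊕ (Σ e : G.E, Fin (m e))
  E := Σ e : G.E, Fin (m e + 1)
  src := fun x =>
    if h : (x.2 : ℕ) = 0 then .inl (G.src x.1)
    else .inr ⟨x.1, ⟨(x.2 : ℕ) - 1, by have := x.2.isLt; omega⟩⟩
  tgt := fun x =>
    if h : (x.2 : ℕ) = m x.1 then .inl (G.tgt x.1)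
    else .inr ⟨x.1, ⟨(x.2 : ℕ), by have := x.2.isLt; omega⟩⟩
  w := fun v =>
    match v with
    | .inl v => G.w v
    | .inr _ => 0

end WGraph

/-! If `φ(e₀) ≥ 2` along an oriented edge `v₀ → v₁`, let `W` be the set of vertices reachable
from `v₁` along oriented edges other than `e₀` carrying nonnegative flow. Acyclicity keeps `v₀`
out of `W`, and by construction every other edge crossing `W` carries flow at least `1` into `W`.
So the net inflow into `W` exceeds `δ_W`; but by `2D + Div(φ) = K_Γ` this net inflow equals
`δ_W - 2 β_D(W)`, which contradicts semistability. -/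

namespace WGraph

attribute [local instance] Classical.propDecidable

open Finset

variable (G : WGraph)

/-- Both sides list the vertices visited by the walk `L` from `u` to `v`. -/
def IsWalk (L : List G.OEdge) (u v : G.V) : Prop :=
  L.map G.osrc ++ [v] = u :: L.map G.otgt

/-- Only meaningful for edges crossing `W`, where it is the flow entering `W`. -/
def flowInto (W : Finset G.V) (φ : G.E → ℤ) (e : G.E) : ℤ :=
  if G.tgt e ∈ W then φ e else -φ e

variable {G}

theorem flowVal_not (φ : G.E → ℤ) (e : G.E) (b : Bool) :
    G.flowVal φ (e, !b) = -G.flowVal φ (e, b) := by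
  cases b <;> simp [flowVal]

theorem osrc_eq_or_osrc_eq_otgt {oe oe' : G.OEdge} (h : oe.1 = oe'.1) :
    G.osrc oe = G.osrc oe' ∨ G.osrc oe = G.otgt oe' := by
  obtain ⟨e, b⟩ := oe
  obtain ⟨e', b'⟩ := oe'
  cases b <;> cases b' <;> simp_all [osrc, otgt]

theorem IsWalk.cons {L : List G.OEdge} {oe : G.OEdge} {v : G.V}
    (h : G.IsWalk L (G.otgt oe) v) : G.IsWalk (oe :: L) (G.osrc oe) v := by
  unfold IsWalk at h ⊢
  simp [h]

theorem IsWalk.osrc_getElem {L : List G.OEdge} {u v : G.V} (h : G.IsWalk L u v) (k : ℕ)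
    (hk : k < L.length) : G.osrc L[k] = (u :: L.map G.otgt)[k]'(by simp; omega) := by
  rw [← List.getElem_of_eq h (by simp; omega), List.getElem_append_left (by simpa using hk),
    List.getElem_map]

theorem IsWalk.exists_suffix {L : List G.OEdge} {u v a : G.V} (h : G.IsWalk L u v)
    (ha : a ∈ u :: L.map G.otgt) :
    ∃ L', G.IsWalk L' a v ∧ L' <:+ L ∧ (a :: L'.map G.otgt) <:+ (u :: L.map G.otgt) := by
  obtain ⟨k, hk, rfl⟩ := List.getElem_of_mem ha
  have hk' : k ≤ L.length := by simp at hk; omega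
  have hdrop : (u :: L.map G.otgt).drop k
      = (u :: L.map G.otgt)[k] :: (L.drop k).map G.otgt := by
    rw [List.drop_eq_getElem_cons hk, List.drop_succ_cons, List.map_drop]
  refine ⟨L.drop k, ?_, List.drop_suffix _ _, hdrop ▸ List.drop_suffix _ _⟩
  have := congrArg (List.drop k) h
  rwa [List.drop_append_of_le_length (by simpa using hk'), hdrop, ← List.map_drop] at this

theorem exists_nodup_walk_of_reflTransGen {R : G.V → G.V → Prop} {P : G.OEdge → Prop}
    (hR : ∀ a b, R a b → ∃ oe, P oe ∧ G.osrc oe = a ∧ G.otgt oe = b) {u v : G.V}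
    (h : Relation.ReflTransGen R u v) :
    ∃ L, G.IsWalk L u v ∧ (∀ oe ∈ L, P oe) ∧ (u :: L.map G.otgt).Nodup := by
  induction h using Relation.ReflTransGen.head_induction_on with
  | refl => exact ⟨[], rfl, by simp, by simp⟩
  | @head a b hab _ ih =>
    obtain ⟨L, hL, hP, hnd⟩ := ih
    obtain ⟨oe, hoe, rfl, rfl⟩ := hR _ _ hab
    by_cases hmem : G.osrc oe ∈ G.otgt oe :: L.map G.otgt
    · obtain ⟨L', hL', hsuf, hsufv⟩ := hL.exists_suffix hmem
      exact ⟨L', hL', fun x hx => hP x (hsuf.subset hx), hnd.sublist hsufv.sublist⟩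
    · refine ⟨oe :: L, hL.cons, ?_, List.nodup_cons.2 ⟨hmem, hnd⟩⟩
      rintro x (_ | ⟨_, hx⟩)
      exacts [hoe, hP x hx]

theorem IsWalk.nodup_map_fst {L : List G.OEdge} {u v : G.V} (h : G.IsWalk L u v)
    (hnd : (u :: L.map G.otgt).Nodup) : (L.map Prod.fst).Nodup := by
  have hvs := List.pairwise_iff_getElem.1 hnd
  refine List.pairwise_iff_getElem.2 fun i j hi hj hij hfst => ?_
  simp only [List.length_map, List.getElem_map] at hi hj hfst
  rcases osrc_eq_or_osrc_eq_otgt hfst with hsrc | hsrc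
  · exact hvs i j (by simp; omega) (by simp; omega) hij
      (by rw [← h.osrc_getElem i hi, ← h.osrc_getElem j hj, hsrc])
  · exact hvs i (j + 1) (by simp; omega) (by simp; omega) (by omega)
      (by rw [← h.osrc_getElem i hi, hsrc]; simp)

theorem isOrientedCycle_cons {oe : G.OEdge} {L : List G.OEdge}
    (hL : G.IsWalk L (G.otgt oe) (G.osrc oe)) (hnd : (G.otgt oe :: L.map G.otgt).Nodup)
    (hoe : oe.1 ∉ L.map Prod.fst) : G.IsOrientedCycle (oe :: L) := by
  have hrot : ((oe :: L).map G.osrc).rotate 1 = (oe :: L).map G.otgt := by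
    have hL' : L.map G.osrc ++ [G.osrc oe] = G.otgt oe :: L.map G.otgt := hL
    simpa [List.rotate_cons_succ] using hL'
  refine ⟨List.cons_ne_nil _ _, List.nodup_cons.2 ⟨hoe, hL.nodup_map_fst hnd⟩, ?_, ?_⟩
  · exact (List.perm_append_singleton _ _).nodup_iff.1 (hL ▸ hnd)
  · intro i
    have := List.getElem_of_eq hrot (i := i) (by simpa using i.2)
    rw [List.getElem_rotate, List.getElem_map, List.getElem_map] at this
    simpa using this.symm

theorem not_phiReach_of_acyclic {φ : G.E → ℤ} (hφ : G.Acyclic φ) {oe : G.OEdge}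
    (hpos : 0 < G.flowVal φ oe) : ¬ G.PhiReach φ {oe.1} (G.otgt oe) (G.osrc oe) := by
  intro hreach
  obtain ⟨L, hL, hP, hnd⟩ := exists_nodup_walk_of_reflTransGen
    (P := fun oe' => oe'.1 ≠ oe.1 ∧ 0 ≤ G.flowVal φ oe')
    (fun _ _ ⟨oe', he, hf, hs, ht⟩ => ⟨oe', ⟨by simpa using he, hf⟩, hs, ht⟩) hreach
  have hoe : oe.1 ∉ L.map Prod.fst := by
    simp only [List.mem_map, not_exists, not_and]
    exact fun x hx hx1 => (hP x hx).1 hx1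
  refine hφ ⟨oe :: L, isOrientedCycle_cons hL hnd hoe, ?_, oe, List.mem_cons_self, hpos⟩
  rintro x (_ | ⟨_, hx⟩)
  exacts [hpos.le, (hP x hx).2]

theorem sum_divOf_eq_sum_flowInto (W : Finset G.V) (φ : G.E → ℤ) :
    ∑ v ∈ W, G.divOf φ v = ∑ e ∈ univ.filter (G.crossing W), G.flowInto W φ e := by
  have hsum : ∑ v ∈ W, G.divOf φ v
      = ∑ e, ((if G.tgt e ∈ W then φ e else 0) - (if G.src e ∈ W then φ e else 0)) := by
    simp only [divOf, sum_sub_distrib]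
    rw [sum_comm, sum_comm (s := W)]
    simp
  rw [hsum, sum_filter]
  refine sum_congr rfl fun e _ => ?_
  by_cases hs : G.src e ∈ W <;> by_cases ht : G.tgt e ∈ W <;> simp [crossing, flowInto, hs, ht]

theorem two_mul_beta_canPol {D : G.V → ℤ} {φ : G.E → ℤ}
    (heq : ∀ v, 2 * D v + G.divOf φ v = G.K v) (W : Finset G.V) :
    2 * G.beta G.canPol D W
      = G.delta W - ((∑ e ∈ univ.filter (G.crossing W), G.flowInto W φ e : ℤ) : ℚ) := by
  have hK : ∑ v ∈ W, (G.K v : ℚ) = 2 * ∑ v ∈ W, (D v : ℚ) + ∑ v ∈ W, (G.divOf φ v : ℚ) := by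
    rw [mul_sum, ← sum_add_distrib]
    exact sum_congr rfl fun v _ => by exact_mod_cast (heq v).symm
  rw [← sum_divOf_eq_sum_flowInto]
  simp only [beta, canPol, ← sum_div]
  push_cast
  rw [hK]
  ring

theorem sum_flowInto_le_delta {D : G.V → ℤ} {φ : G.E → ℤ} (hss : G.Semistable G.canPol D)
    (heq : ∀ v, 2 * D v + G.divOf φ v = G.K v) {W : Finset G.V} (hW : W ≠ univ) :
    ∑ e ∈ univ.filter (G.crossing W), G.flowInto W φ e ≤ G.delta W := by
  have h := hss W hW
  rw [← mul_nonneg_iff_of_pos_left two_pos, two_mul_beta_canPol heq] at h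
  exact_mod_cast sub_nonneg.1 h

theorem one_le_flowInto_of_closed {φ : G.E → ℤ} {A : Finset G.E} {W : Finset G.V}
    (hW : ∀ a b, a ∈ W → G.phiStep φ A a b → b ∈ W) {e : G.E} (he : G.crossing W e)
    (heA : e ∉ A) : 1 ≤ G.flowInto W φ e := by
  by_cases hs : G.src e ∈ W
  · have ht : G.tgt e ∉ W := by simpa [crossing, hs] using he
    have hφ : ¬ 0 ≤ φ e := fun h0 =>
      ht (hW _ _ hs ⟨(e, true), heA, by simpa [flowVal] using h0, rfl, rfl⟩)
    simp only [flowInto, if_neg ht]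
    omega
  · have ht : G.tgt e ∈ W := by simpa [crossing, hs] using he
    have hφ : ¬ φ e ≤ 0 := fun h0 =>
      hs (hW _ _ ht ⟨(e, false), heA, by simpa [flowVal] using h0, rfl, rfl⟩)
    simp only [flowInto, if_pos ht]
    omega

theorem flowInto_eq_flowVal {W : Finset G.V} (φ : G.E → ℤ) {oe : G.OEdge}
    (ht : G.otgt oe ∈ W) (hs : G.osrc oe ∉ W) :
    G.crossing W oe.1 ∧ G.flowInto W φ oe.1 = G.flowVal φ oe := by
  obtain ⟨e, _ | _⟩ := oe <;> simp_all [crossing, flowInto, flowVal, osrc, otgt]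

theorem flowVal_le_one {D : G.V → ℤ} {φ : G.E → ℤ} (hss : G.Semistable G.canPol D)
    (hacyc : G.Acyclic φ) (heq : ∀ v, 2 * D v + G.divOf φ v = G.K v) (oe : G.OEdge) :
    G.flowVal φ oe ≤ 1 := by
  by_contra! hoe
  set W := univ.filter (G.PhiReach φ {oe.1} (G.otgt oe))
  have hclosed : ∀ a b, a ∈ W → G.phiStep φ {oe.1} a b → b ∈ W := by
    simp only [W, mem_filter, mem_univ, true_and]
    exact fun _ _ ha hab => ha.tail hab
  have hsrc : G.osrc oe ∉ W := by
    simpa [W] using not_phiReach_of_acyclic hacyc (by omega : 0 < G.flowVal φ oe)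
  obtain ⟨hcross, hin⟩ :=
    flowInto_eq_flowVal (W := W) φ (mem_filter.2 ⟨mem_univ _, .refl⟩) hsrc
  have hle := sum_flowInto_le_delta (φ := φ) hss heq (W := W) fun h => hsrc (h ▸ mem_univ _)
  have hlt : (G.delta W : ℤ) < ∑ e ∈ univ.filter (G.crossing W), G.flowInto W φ e := by
    calc (G.delta W : ℤ) = ∑ e ∈ univ.filter (G.crossing W), 1 := by simp [delta]
      _ < _ := sum_lt_sum
          (fun e he => if h : e = oe.1 then by subst h; omega
            else one_le_flowInto_of_closed hclosed (mem_filter.1 he).2 (by simpa using h))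
          ⟨oe.1, by simpa using hcross, by omega⟩
  omega

end WGraph

attribute [local instance] Classical.propDecidable

theorem stmt2_general (G : WGraph) (D : G.V → ℤ)
    (hss : G.Semistable G.canPol D) (φ : G.E → ℤ) (hacyc : G.Acyclic φ)
    (heq : ∀ v, 2 * D v + G.divOf φ v = G.K v) :
    ∀ oe : G.OEdge, |G.flowVal φ oe| ≤ 1 := by
  rintro ⟨e, b⟩
  have hneg := G.flowVal_le_one hss hacyc heq (e, !b)
  rw [WGraph.flowVal_not] at hneg
  exact abs_le.2 ⟨by omega, G.flowVal_le_one hss hacyc heq (e, b)⟩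

/-- If `D` is semistable (canonical polarization of degree
`g-1`) and `φ` is an acyclic flow with `2D + Div(φ) = K_Γ`, then
`|φ(e)| ≤ 1` for every oriented edge `e`. -/
theorem stmt2 (G : WGraph) (hconn : G.Connected) (D : G.V → ℤ)
    (hss : G.Semistable G.canPol D) (φ : G.E → ℤ) (hacyc : G.Acyclic φ)
    (heq : ∀ v, 2 * D v + G.divOf φ v = G.K v) :
    ∀ oe : G.OEdge, |G.flowVal φ oe| ≤ 1 :=
  stmt2_general G D hss φ hacyc heq
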